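/- arXiv:2206.05135 — 8 statements merged into one kernel-verified Lean document; each statement's English description precedes it below -/
import Mathlib

section
/- For every real number y with 0 < y < 1, we have (log₂(1+y))² > log₂(1+y²). -/
theorem stmt0 (y : ℝ) (h0 : 0 < y) (h1 : y < 1) :
    (Real.logb 2 (1 + y)) ^ 2 > Real.logb 2 (1 + y ^ 2) := by
  set x : ℝ := 1 + y with hx
  have hx1 : (1:ℝ) < x := by simp [hx]; linarith
  have hx2 : x < 2 := by simp [hx]; linarith
  have hxpos : (0:ℝ) < x := by linarith
  set a : ℝ := Real.logb 2 x with ha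
  have ha0 : 0 < a := Real.logb_pos (by norm_num) hx1
  have ha1 : a < 1 := by
    have := Real.logb_lt_logb (b := 2) (by norm_num) hxpos hx2
    simpa [ha] using this
  have hxa : (2:ℝ) ^ a = x := Real.rpow_logb (by norm_num) (by norm_num) hxpos
  -- strict concavity of t ↦ t^a on [0,∞): value at x above chord through (1,1),(2,2^a)
  have hconc := Real.strictConcaveOn_rpow ha0 ha1
  have hkey : (2 - x) * (1:ℝ) ^ a + (x - 1) * (2:ℝ) ^ a < x ^ a := by
    have := hconc.2 (Set.mem_Ici.2 (by norm_num : (0:ℝ) ≤ 1))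
      (Set.mem_Ici.2 (by norm_num : (0:ℝ) ≤ 2)) (by norm_num)
      (by linarith : (0:ℝ) < 2 - x) (by linarith : (0:ℝ) < x - 1) (by ring)
    simp only [smul_eq_mul, mul_one] at this
    have harg : 2 - x + (x - 1) * 2 = x := by ring
    rw [harg] at this
    linarith
  have hxa' : 1 + y ^ 2 < x ^ a := by
    have h1a : (1:ℝ) ^ a = 1 := Real.one_rpow a
    rw [hxa, h1a] at hkey
    nlinarith [hkey]
  have hpos2 : (0:ℝ) < 1 + y ^ 2 := by positivity
  have := Real.logb_lt_logb (b := 2) (by norm_num) hpos2 hxa'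
  have hlog : Real.logb 2 (x ^ a) = a * a := by
    rw [Real.logb, Real.log_rpow hxpos, mul_div_assoc]
    rfl
  rw [hlog] at this
  calc Real.logb 2 (1 + y ^ 2) < a * a := this
    _ = (Real.logb 2 (1 + y)) ^ 2 := by rw [sq]
end

section
/- For every real number z < 0, the function g(z) = ln(log₂(1+e^z)) satisfies 2·g(z) > g(2z). -/
/-!
Write `G z = log (log (1 + eᶻ))`, so that the function of the statement is `G z - log (log 2)`,
which vanishes at `0`. The derivative of `G` is `1 / φ (eᶻ)` with `φ t = (1 + t) log (1 + t) / t`,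
the slope from `0` of the strictly convex function `t ↦ (1 + t) log (1 + t)`. Hence `φ` is
strictly increasing on `(0, ∞)`, `G'` is strictly decreasing, and `G` is strictly concave.
Strict concavity at the midpoint `z` of `2z` and `0` gives `2 G z > G (2z) + G 0`, which is the claim.
-/

open Real Set

lemma strictMonoOn_one_add_mul_log_one_add_div :
    StrictMonoOn (fun t : ℝ => (1 + t) * log (1 + t) / t) (Ioi 0) := by
  have hconv := strictConvexOn_mul_log.translate_right (1 : ℝ)
  intro s (hs : 0 < s) t (ht : 0 < t) hst
  have hmem : ∀ x : ℝ, 0 ≤ x → x ∈ (fun x => 1 + x) ⁻¹' Ici 0 := fun x hx =>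
    show (0 : ℝ) ≤ 1 + x by linarith
  simpa using hconv.secant_strict_mono (hmem 0 le_rfl) (hmem s hs.le) (hmem t ht.le)
    hs.ne' ht.ne' hst

lemma hasDerivAt_log_log_one_add_exp (z : ℝ) :
    HasDerivAt (fun z => log (log (1 + exp z)))
      ((1 + exp z) * log (1 + exp z) / exp z)⁻¹ z := by
  have hpos : 0 < log (1 + exp z) := log_pos (by linarith [exp_pos z])
  have h := (((hasDerivAt_exp z).const_add 1).log (by positivity)).log hpos.ne'
  convert h using 1
  field_simp

lemma strictConcaveOn_log_log_one_add_exp :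
    StrictConcaveOn ℝ univ (fun z => log (log (1 + exp z))) := by
  refine StrictAnti.strictConcaveOn_univ_of_deriv
    (continuous_iff_continuousAt.2 fun z =>
      (hasDerivAt_log_log_one_add_exp z).differentiableAt.continuousAt) fun a b hab => ?_
  simp only [(hasDerivAt_log_log_one_add_exp _).deriv]
  have hpos : 0 < (1 + exp a) * log (1 + exp a) / exp a := by
    have := exp_pos a
    have : 0 < log (1 + exp a) := log_pos (by linarith)
    positivity
  exact inv_strictAnti₀ hpos (strictMonoOn_one_add_mul_log_one_add_div (exp_pos a) (exp_pos b)
    (exp_lt_exp.2 hab))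

lemma log_logb_two_one_add_exp (z : ℝ) :
    log (logb 2 (1 + exp z)) = log (log (1 + exp z)) - log (log 2) :=
  log_div (log_pos (by linarith [exp_pos z])).ne' (log_pos one_lt_two).ne'

theorem stmt1 (z : ℝ) (hz : z < 0) :
    2 * Real.log (Real.logb 2 (1 + Real.exp z)) >
      Real.log (Real.logb 2 (1 + Real.exp (2 * z))) := by
  have hmid := strictConcaveOn_log_log_one_add_exp.2 (mem_univ (2 * z)) (mem_univ 0)
    (by linarith) one_half_pos one_half_pos (add_halves 1)
  have hz_mid : (1 / 2 : ℝ) • (2 * z) + (1 / 2 : ℝ) • (0 : ℝ) = z := by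
    simp only [smul_eq_mul]; ring
  rw [hz_mid] at hmid
  norm_num at hmid
  rw [log_logb_two_one_add_exp, log_logb_two_one_add_exp]
  linarith
end

section
/- The function f(R) = 8^R + 1 − 3·√(8^(2R−1) + 8^(R−1)) is strictly decreasing on [0,1], with f(0) = 1/2 and f(1) = 0. -/
lemma key_sqrt (t : ℝ) (ht : 0 < t) :
    Real.sqrt ((t * t + t) / 8) < 3 * (2 * t + 1) / 16 := by
  rw [Real.sqrt_lt' (by nlinarith)]
  nlinarith [sq_nonneg t]

theorem stmt7 (f : ℝ → ℝ)
    (hf : f = fun R => (8 : ℝ) ^ R + 1 - 3 * Real.sqrt ((8 : ℝ) ^ (2 * R - 1) + (8 : ℝ) ^ (R - 1))) :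
    StrictAntiOn f (Set.Icc (0 : ℝ) 1) ∧ f 0 = 1 / 2 ∧ f 1 = 0 := by
  have h8 : (0:ℝ) < 8 := by norm_num
  have harg : ∀ R : ℝ, (8 : ℝ) ^ (2 * R - 1) + (8 : ℝ) ^ (R - 1)
      = ((8:ℝ)^R * (8:ℝ)^R + (8:ℝ)^R) / 8 := by
    intro R
    rw [Real.rpow_sub h8, Real.rpow_sub h8, Real.rpow_one,
      show 2 * R = R + R by ring, Real.rpow_add h8]
    ring
  refine ⟨?_, ?_, ?_⟩
  · intro a _ b _ hab
    rw [hf]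
    simp only
    rw [harg a, harg b]
    set t := (8:ℝ)^a with hta
    set s := (8:ℝ)^b with hsa
    have ht : 0 < t := Real.rpow_pos_of_pos h8 a
    have hs : 0 < s := Real.rpow_pos_of_pos h8 b
    have hts : t < s := Real.rpow_lt_rpow_left_iff (by norm_num : (1:ℝ) < 8) |>.2 hab
    set u := Real.sqrt ((t * t + t) / 8) with hu
    set v := Real.sqrt ((s * s + s) / 8) with hv
    have hu0 : 0 < u := Real.sqrt_pos.2 (by positivity)
    have hv0 : 0 < v := Real.sqrt_pos.2 (by positivity)
    have hu2 : u ^ 2 = (t * t + t) / 8 := Real.sq_sqrt (by positivity)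
    have hv2 : v ^ 2 = (s * s + s) / 8 := Real.sq_sqrt (by positivity)
    have hku : u < 3 * (2 * t + 1) / 16 := key_sqrt t ht
    have hkv : v < 3 * (2 * s + 1) / 16 := key_sqrt s hs
    -- want : s + 1 - 3 * v < t + 1 - 3 * u
    nlinarith [mul_pos (sub_pos.2 hts) (add_pos hu0 hv0),
      mul_lt_mul_of_pos_left (add_lt_add hku hkv) (sub_pos.2 hts)]
  · rw [hf]
    simp only
    rw [harg 0, Real.rpow_zero]
    rw [show ((1:ℝ) * 1 + 1) / 8 = (1/2)^2 by norm_num, Real.sqrt_sq (by norm_num)]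
    norm_num
  · rw [hf]
    simp only
    rw [harg 1, Real.rpow_one]
    rw [show ((8:ℝ) * 8 + 8) / 8 = 3^2 by norm_num, Real.sqrt_sq (by norm_num)]
    norm_num
end

section
/- Let f : {0,1}ⁿ → ℝ be nonnegative, q ≥ 1 an integer, and 0 ≤ ε ≤ 1/2. Then ‖T_ε f‖_q^q ≥ (ε^q + (1−ε)^q)^n · ‖f‖_q^q, where ‖g‖_q^q = 2^{−n} Σ_x g(x)^q. -/
open Finset

noncomputable def noiseOp {ι : Type*} [Fintype ι] [DecidableEq ι] (ε : ℝ)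
    (f : (ι → ZMod 2) → ℝ) (x : ι → ZMod 2) : ℝ :=
  ∑ y : ι → ZMod 2,
    ε ^ hammingDist y x * (1 - ε) ^ (Fintype.card ι - hammingDist y x) * f y

-- superadditivity of t ↦ t^q
lemma sum_pow_le_pow_sum' {α : Type*} (s : Finset α) (g : α → ℝ)
    (hg : ∀ i ∈ s, 0 ≤ g i) {q : ℕ} (hq : 1 ≤ q) :
    ∑ i ∈ s, g i ^ q ≤ (∑ i ∈ s, g i) ^ q := by
  induction s using Finset.cons_induction with
  | empty => simp [zero_pow (by omega : q ≠ 0)]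
  | cons a t ha ih =>
    rw [Finset.sum_cons, Finset.sum_cons]
    have h1 : 0 ≤ g a := hg a (Finset.mem_cons_self a t)
    have h2 : ∀ i ∈ t, 0 ≤ g i := fun i hi => hg i (Finset.mem_cons_of_mem hi)
    calc g a ^ q + ∑ i ∈ t, g i ^ q ≤ g a ^ q + (∑ i ∈ t, g i) ^ q := by
          linarith [ih h2]
      _ ≤ (g a + ∑ i ∈ t, g i) ^ q :=
          pow_add_pow_le h1 (Finset.sum_nonneg h2) (by omega)

lemma sum_over_cube {n : ℕ} (a b : ℝ) (y : Fin n → ZMod 2) :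
    ∑ x : Fin n → ZMod 2, a ^ hammingDist y x * b ^ (n - hammingDist y x)
      = (a + b) ^ n := by
  have key : ∀ x : Fin n → ZMod 2,
      a ^ hammingDist y x * b ^ (n - hammingDist y x)
        = ∏ i : Fin n, (if y i = x i then b else a) := by
    intro x
    rw [Finset.prod_ite (f := fun _ => b) (g := fun _ => a),
      Finset.prod_const, Finset.prod_const]
    have hd : hammingDist y x = #{i : Fin n | ¬ y i = x i} := by
      simp [hammingDist, Ne]
    have hc : #({i : Fin n | y i = x i} : Finset (Fin n))
        + #({i : Fin n | ¬ y i = x i} : Finset (Fin n)) = n := by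
      simpa using Finset.card_filter_add_card_filter_not
        (s := (Finset.univ : Finset (Fin n))) (p := fun i => y i = x i)
    rw [hd, mul_comm]
    congr 2
    omega
  simp_rw [key]
  rw [← Fintype.piFinset_univ, ← Finset.prod_univ_sum (fun _ => (univ : Finset (ZMod 2))) (fun i t => if y i = t then b else a)]
  have h2 : ∀ i : Fin n, ∑ t : ZMod 2, (if y i = t then b else a) = a + b := by
    intro i
    have : (Finset.univ : Finset (ZMod 2)) = {0, 1} := by decide
    rw [this, Finset.sum_insert (by decide), Finset.sum_singleton]
    have : y i = 0 ∨ y i = 1 := by revert i; intro i; exact (by decide : ∀ t : ZMod 2, t = 0 ∨ t = 1) (y i)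
    rcases this with h | h <;> simp [h] <;> ring
  simp_rw [h2, Finset.prod_const, Finset.card_univ, Fintype.card_fin]

theorem stmt9 (n : ℕ) (ε : ℝ) (hε0 : 0 ≤ ε) (hε : ε ≤ 1 / 2) (q : ℕ) (hq : 1 ≤ q)
    (f : (Fin n → ZMod 2) → ℝ) (hf : ∀ x, 0 ≤ f x) :
    (1 / 2 ^ n) * ∑ x : Fin n → ZMod 2, (noiseOp ε f x) ^ q ≥
      (ε ^ q + (1 - ε) ^ q) ^ n * ((1 / 2 ^ n) * ∑ x : Fin n → ZMod 2, f x ^ q) := by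
  have hε1 : (0:ℝ) ≤ 1 - ε := by linarith
  have key : (ε ^ q + (1 - ε) ^ q) ^ n * (∑ x : Fin n → ZMod 2, f x ^ q)
      ≤ ∑ x : Fin n → ZMod 2, (noiseOp ε f x) ^ q := by
    have step1 : ∀ x : Fin n → ZMod 2,
        ∑ y : Fin n → ZMod 2,
          (ε ^ hammingDist y x * (1 - ε) ^ (n - hammingDist y x) * f y) ^ q
          ≤ (noiseOp ε f x) ^ q := by
      intro x
      unfold noiseOp
      rw [Fintype.card_fin]
      exact sum_pow_le_pow_sum' _ _
        (fun y _ => mul_nonneg (mul_nonneg (pow_nonneg hε0 _) (pow_nonneg hε1 _)) (hf y)) hq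
    calc (ε ^ q + (1 - ε) ^ q) ^ n * ∑ x : Fin n → ZMod 2, f x ^ q
        = ∑ y : Fin n → ZMod 2, ∑ x : Fin n → ZMod 2,
            (ε ^ hammingDist y x * (1 - ε) ^ (n - hammingDist y x) * f y) ^ q := by
          rw [Finset.mul_sum]
          apply Finset.sum_congr rfl
          intro y _
          have : ∀ x : Fin n → ZMod 2,
              (ε ^ hammingDist y x * (1 - ε) ^ (n - hammingDist y x) * f y) ^ q
              = (ε ^ q) ^ hammingDist y x * ((1 - ε) ^ q) ^ (n - hammingDist y x)
                  * f y ^ q := by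
            intro x
            rw [mul_pow, mul_pow, ← pow_mul, ← pow_mul, ← pow_mul, ← pow_mul,
              Nat.mul_comm (hammingDist y x) q, Nat.mul_comm (n - hammingDist y x) q]
          simp_rw [this, ← Finset.sum_mul, sum_over_cube (ε ^ q) ((1-ε) ^ q) y]
      _ = ∑ x : Fin n → ZMod 2, ∑ y : Fin n → ZMod 2,
            (ε ^ hammingDist y x * (1 - ε) ^ (n - hammingDist y x) * f y) ^ q :=
          Finset.sum_comm
      _ ≤ ∑ x : Fin n → ZMod 2, (noiseOp ε f x) ^ q :=
          Finset.sum_le_sum fun x _ => step1 x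
  have h2n : (0:ℝ) < 1 / 2 ^ n := by positivity
  calc (ε ^ q + (1 - ε) ^ q) ^ n * ((1 / 2 ^ n) * ∑ x : Fin n → ZMod 2, f x ^ q)
      = (1 / 2 ^ n) * ((ε ^ q + (1 - ε) ^ q) ^ n * ∑ x : Fin n → ZMod 2, f x ^ q) := by
        ring
    _ ≤ (1 / 2 ^ n) * ∑ x : Fin n → ZMod 2, (noiseOp ε f x) ^ q :=
        mul_le_mul_of_nonneg_left key h2n.le
end

section
/- Let C ⊆ 𝔽₂ⁿ be a linear code (a subspace), and for each weight i let a_i = |{x ∈ C : |x| = i}| where |x| is the Hamming weight. Let f = (2ⁿ/|C|)·1_C and 0 ≤ ε ≤ 1/2. Then max_x (T_ε f)(x) = (T_ε f)(0) = (2ⁿ/|C|)·Σ_{i=0}^n a_i ε^i (1−ε)^{n−i}. -/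
/-!
Write the noise kernel in the Walsh basis: with `ρ = 1 - 2ε`,
`2ⁿ ε^|z| (1-ε)^(n-|z|) = ∑_S ρ^|S| χ_S(z)`. Hence `(T_ε 1_C)(x)` is, up to `2⁻ⁿ`,
`∑_S ρ^|S| χ_S(x) ∑_{c ∈ C} χ_S(c)`. A character sum over a subgroup is `|C|` or `0`, so every
term is nonnegative once `ρ ≥ 0`, and replacing `χ_S(x) ≤ 1` by `χ_S(0) = 1` can only increase it.
-/

open Finset

lemma AddChar.map_sum_eq_prod {ι A M : Type*} [AddCommMonoid A] [CommMonoid M]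
    (ψ : AddChar A M) (s : Finset ι) (a : ι → A) : ψ (∑ i ∈ s, a i) = ∏ i ∈ s, ψ (a i) := by
  induction s using Finset.cons_induction with
  | empty => simp
  | cons i s hi ih => rw [sum_cons, prod_cons, map_add_eq_mul, ih]

lemma AddChar.sum_mem_nonneg {G S R : Type*} [AddGroup G] [SetLike S G] [AddSubgroupClass S G]
    [CommSemiring R] [PartialOrder R] [IsOrderedRing R] [IsDomain R]
    (H : S) [Fintype H] (ψ : AddChar G R) : 0 ≤ ∑ h : H, ψ h := by
  classical
  have hsum := (ψ.compAddMonoidHom (AddSubgroupClass.subtype H)).sum_eq_ite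
  simp only [compAddMonoidHom_apply, AddSubgroupClass.coe_subtype] at hsum
  rw [hsum]
  split_ifs <;> positivity

noncomputable def signChar : AddChar (ZMod 2) ℝ :=
  AddChar.zmodChar 2 (by norm_num : (-1 : ℝ) ^ 2 = 1)

lemma signChar_le_one (b : ZMod 2) : signChar b ≤ 1 := by
  rcases neg_one_pow_eq_or ℝ b.val with h | h <;> simp [signChar, AddChar.zmodChar_apply, h]

section NoiseOp

variable {ι : Type*} [Fintype ι]

noncomputable def walsh (S : ι → ZMod 2) : AddChar (ι → ZMod 2) ℝ :=
  signChar.compAddMonoidHom (AddMonoidHom.mk' (S ⬝ᵥ ·) (dotProduct_add S))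

lemma walsh_apply (S z : ι → ZMod 2) : walsh S z = ∏ i, signChar (S i * z i) :=
  signChar.map_sum_eq_prod univ _

lemma walsh_le_one (S z : ι → ZMod 2) : walsh S z ≤ 1 := signChar_le_one _

noncomputable def noiseWeight (ε : ℝ) (z : ι → ZMod 2) : ℝ :=
  ε ^ hammingNorm z * (1 - ε) ^ (Fintype.card ι - hammingNorm z)

lemma prod_ite_eq_zero_eq_pow_mul_pow {R : Type*} [CommMonoid R] (z : ι → ZMod 2) (a b : R) :
    ∏ i, (if z i = 0 then a else b)
      = a ^ (Fintype.card ι - hammingNorm z) * b ^ hammingNorm z := by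
  classical
  rw [prod_ite, prod_const, prod_const]
  congr 2
  have hcard := card_filter_add_card_filter_not (s := univ) (p := fun i => z i = 0)
  rw [card_univ] at hcard
  change _ = _ - #{i | ¬ z i = 0}
  omega

lemma two_mul_ite_eq_sum_signChar (ε : ℝ) (t : ZMod 2) :
    2 * (if t = 0 then 1 - ε else ε)
      = ∑ b : ZMod 2, (if b = 0 then 1 else 1 - 2 * ε) * signChar (b * t) := by
  rw [show (univ : Finset (ZMod 2)) = {0, 1} from rfl]
  rcases (by decide : ∀ d : ZMod 2, d = 0 ∨ d = 1) t with rfl | rfl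
  · simp [signChar]
    ring
  · simp [signChar, AddChar.zmodChar_apply, ZMod.val_one]

variable [DecidableEq ι]

lemma two_pow_mul_noiseWeight (ε : ℝ) (z : ι → ZMod 2) :
    2 ^ Fintype.card ι * noiseWeight ε z
      = ∑ S : ι → ZMod 2, (1 - 2 * ε) ^ hammingNorm S * walsh S z := by
  have hprod : noiseWeight ε z = ∏ i, (if z i = 0 then 1 - ε else ε) := by
    rw [prod_ite_eq_zero_eq_pow_mul_pow, noiseWeight, mul_comm]
  rw [hprod, ← card_univ, ← prod_const, ← prod_mul_distrib]
  simp_rw [two_mul_ite_eq_sum_signChar, Fintype.prod_sum, prod_mul_distrib,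
    prod_ite_eq_zero_eq_pow_mul_pow, one_pow, one_mul, walsh_apply]

variable {T : Type*} [SetLike T (ι → ZMod 2)]

lemma sum_noiseWeight_sub_le [AddSubgroupClass T (ι → ZMod 2)] (C : T) [Fintype C] {ε : ℝ}
    (hε : ε ≤ 1 / 2) (x : ι → ZMod 2) :
    ∑ c : C, noiseWeight ε ((c : ι → ZMod 2) - x) ≤ ∑ c : C, noiseWeight ε (c : ι → ZMod 2) := by
  rw [← mul_le_mul_iff_right₀ (by positivity : (0 : ℝ) < 2 ^ Fintype.card ι), mul_sum, mul_sum]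
  simp_rw [two_pow_mul_noiseWeight]
  rw [sum_comm, sum_comm (s := univ (α := C))]
  refine sum_le_sum fun S _ => ?_
  have hρ : 0 ≤ (1 - 2 * ε) ^ hammingNorm S := pow_nonneg (by linarith) _
  simp_rw [sub_eq_add_neg, AddChar.map_add_eq_mul, ← mul_sum, ← sum_mul]
  exact mul_le_mul_of_nonneg_left
    (mul_le_of_le_one_right ((walsh S).sum_mem_nonneg C) (walsh_le_one S _)) hρ

lemma noiseOp_eq_sum (ε : ℝ) (f : (ι → ZMod 2) → ℝ) (x : ι → ZMod 2) :
    noiseOp ε f x = ∑ y, noiseWeight ε (y - x) * f y := by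
  refine sum_congr rfl fun y _ => ?_
  rw [hammingDist_comm, hammingDist_eq_hammingNorm, neg_add_eq_sub, noiseWeight]

lemma noiseOp_indicator_const (ε K : ℝ) (C : T) [Fintype C] (x : ι → ZMod 2) :
    noiseOp ε ((C : Set (ι → ZMod 2)).indicator fun _ => K) x
      = K * ∑ c : C, noiseWeight ε ((c : ι → ZMod 2) - x) := by
  classical
  rw [noiseOp_eq_sum, mul_sum,
    ← sum_subtype {y | y ∈ C} (by simp) fun y => K * noiseWeight ε (y - x)]
  simp_rw [Set.indicator_apply, SetLike.mem_coe, mul_ite, mul_zero, ← sum_filter]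
  exact sum_congr rfl fun _ _ => mul_comm _ _

lemma sum_noiseWeight_eq_sum_card (ε : ℝ) (C : T) [Fintype C] :
    ∑ c : C, noiseWeight ε (c : ι → ZMod 2) = ∑ i ∈ range (Fintype.card ι + 1),
      ({x | x ∈ C ∧ hammingNorm x = i}.ncard : ℝ) * ε ^ i * (1 - ε) ^ (Fintype.card ι - i) := by
  classical
  rw [← sum_subtype {y | y ∈ C} (by simp) fun y => noiseWeight ε y,
    ← sum_fiberwise_of_maps_to (g := hammingNorm) (t := range (Fintype.card ι + 1))
      fun y _ => mem_range_succ_iff.2 hammingNorm_le_card_fintype]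
  refine sum_congr rfl fun i _ => ?_
  rw [sum_congr rfl fun y hy => by rw [noiseWeight, (mem_filter.1 hy).2], sum_const, nsmul_eq_mul,
    mul_assoc, ← Set.ncard_coe_finset]
  congr
  ext
  simp

end NoiseOp

theorem stmt11_general (n : ℕ) (C : Submodule (ZMod 2) (Fin n → ZMod 2)) (ε : ℝ)
    (hε : ε ≤ 1 / 2) (a : ℕ → ℕ)
    (ha : ∀ i, a i = Set.ncard {x : Fin n → ZMod 2 | x ∈ C ∧ hammingNorm x = i})
    (f : (Fin n → ZMod 2) → ℝ)
    (hf : f = Set.indicator (C : Set (Fin n → ZMod 2)) (fun _ => 2 ^ n / (Nat.card C : ℝ))) :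
    (⨆ x : Fin n → ZMod 2, noiseOp ε f x) = noiseOp ε f 0 ∧
    noiseOp ε f 0 = (2 ^ n / (Nat.card C : ℝ)) *
      ∑ i ∈ Finset.range (n + 1), (a i : ℝ) * ε ^ i * (1 - ε) ^ (n - i) := by
  classical
  have hle : ∀ x, noiseOp ε f x ≤ noiseOp ε f 0 := fun x => by
    rw [hf, noiseOp_indicator_const ε _ C, noiseOp_indicator_const ε _ C]
    exact mul_le_mul_of_nonneg_left (by simpa using sum_noiseWeight_sub_le C hε x) (by positivity)
  refine ⟨le_antisymm (ciSup_le hle) (le_ciSup (Set.finite_range _).bddAbove 0), ?_⟩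
  rw [hf, noiseOp_indicator_const ε _ C]
  simp [sum_noiseWeight_eq_sum_card, ha]

theorem stmt11 (n : ℕ) (C : Submodule (ZMod 2) (Fin n → ZMod 2)) (ε : ℝ)
    (hε0 : 0 ≤ ε) (hε : ε ≤ 1 / 2) (a : ℕ → ℕ)
    (ha : ∀ i, a i = Set.ncard {x : Fin n → ZMod 2 | x ∈ C ∧ hammingNorm x = i})
    (f : (Fin n → ZMod 2) → ℝ)
    (hf : f = Set.indicator (C : Set (Fin n → ZMod 2)) (fun _ => 2 ^ n / (Nat.card C : ℝ))) :
    (⨆ x : Fin n → ZMod 2, noiseOp ε f x) = noiseOp ε f 0 ∧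
    noiseOp ε f 0 = (2 ^ n / (Nat.card C : ℝ)) *
      ∑ i ∈ Finset.range (n + 1), (a i : ℝ) * ε ^ i * (1 - ε) ^ (n - i) :=
  stmt11_general n C ε hε a ha f hf
end

section
/- Let n be even, C = {(x₁,x₂) ∈ 𝔽₂^{n/2} × 𝔽₂^{n/2} : x₁ = x₂}, f = |C|·1_C, and 0 ≤ ε ≤ 1/2. Then ‖T_ε f‖₂² = (1 + (1−2ε)⁴)^{n/2}, where ‖g‖₂² = 2^{−n} Σ_x g(x)². -/
open Finset

/-!
Write the noise kernel as a product of one-coordinate kernels `k_ε(a, b)`. Summing it against the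
indicator of the diagonal `{x₁ = x₂}` makes each pair of coordinates `(x₁ i, x₂ i)` see two
independent rounds of noise from a common source, which is a single round at rate `δ = 2ε(1 - ε)`:
`T_ε f x = 2^m ∏ᵢ k_δ(x₁ i, x₂ i)`. Squaring and summing over `x` then factorises over the `m` pairs,
each contributing `∑_{a,b} k_δ(a, b)² = 1 + (1 - 2δ)² = 1 + (1 - 2ε)⁴`.
-/

def noiseKernel {α : Type*} [DecidableEq α] (ε : ℝ) (a b : α) : ℝ :=
  if a = b then 1 - ε else ε

lemma pow_hammingDist_mul_pow_eq_prod_noiseKernel {ι α : Type*} [Fintype ι] [DecidableEq α]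
    (ε : ℝ) (y x : ι → α) :
    ε ^ hammingDist y x * (1 - ε) ^ (Fintype.card ι - hammingDist y x)
      = ∏ i, noiseKernel ε (y i) (x i) := by
  have hcard : #{i | y i = x i} = Fintype.card ι - hammingDist y x := by
    have hsplit := card_filter_add_card_filter_not (s := univ) (fun i => y i = x i)
    rw [card_univ] at hsplit
    simp only [hammingDist, ne_eq]
    omega
  simp only [noiseKernel, prod_ite, prod_const, hcard, hammingDist, mul_comm]

lemma noiseOp_eq_sum_prod_noiseKernel {ι : Type*} [Fintype ι] [DecidableEq ι] (ε : ℝ)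
    (f : (ι → ZMod 2) → ℝ) (x : ι → ZMod 2) :
    noiseOp ε f x = ∑ y, (∏ i, noiseKernel ε (y i) (x i)) * f y := by
  simp only [noiseOp, pow_hammingDist_mul_pow_eq_prod_noiseKernel]

lemma sum_zmod_two {M : Type*} [AddCommMonoid M] (F : ZMod 2 → M) : ∑ u, F u = F 0 + F 1 :=
  Fin.sum_univ_two F

lemma sum_noiseKernel_mul_noiseKernel (ε : ℝ) (a b : ZMod 2) :
    ∑ u, noiseKernel ε u a * noiseKernel ε u b = noiseKernel (2 * ε * (1 - ε)) a b := by
  have h01 : ∀ a : ZMod 2, a = 0 ∨ a = 1 := by decide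
  rcases h01 a with rfl | rfl <;> rcases h01 b with rfl | rfl <;>
    simp +decide [noiseKernel, sum_zmod_two] <;> ring

lemma sum_sum_noiseKernel_sq (δ : ℝ) :
    ∑ a : ZMod 2, ∑ b, noiseKernel δ a b ^ 2 = 1 + (1 - 2 * δ) ^ 2 := by
  simp only [noiseKernel, ite_pow, sum_zmod_two, ↓reduceIte, zero_ne_one, one_ne_zero]
  ring

lemma sum_mul_indicator_range {β γ R : Type*} [Fintype β] [Fintype γ]
    [NonUnitalNonAssocSemiring R] {g : γ → β} (hg : Function.Injective g) (K F : β → R) :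
    ∑ y, K y * (Set.range g).indicator F y = ∑ c, K (g c) * F (g c) := by
  have hrange : Set.range g = ↑(univ.map ⟨g, hg⟩) := by simp
  simp only [← Set.indicator_mul_right, hrange]
  rw [sum_indicator_subset _ (subset_univ _), sum_map]
  rfl

lemma sum_prod_sumElim {ι α R : Type*} [Fintype ι] [DecidableEq ι] [Fintype α] [CommSemiring R]
    (g : ι → α → α → R) :
    ∑ x : ι ⊕ ι → α, ∏ i, g i (x (Sum.inl i)) (x (Sum.inr i)) = ∏ i, ∑ a, ∑ b, g i a b := by
  rw [← (Equiv.sumArrowEquivProdArrow ι ι α).symm.sum_comp, Fintype.sum_prod_type]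
  simp only [Equiv.sumArrowEquivProdArrow_symm_apply_inl,
    Equiv.sumArrowEquivProdArrow_symm_apply_inr, Fintype.prod_sum]

section Diagonal

variable {ι α : Type*}

lemma setOf_forall_inl_eq_inr :
    {x : ι ⊕ ι → α | ∀ i, x (Sum.inl i) = x (Sum.inr i)} = Set.range fun c => Sum.elim c c := by
  ext x
  refine ⟨fun hx => ⟨fun i => x (Sum.inl i), ?_⟩, ?_⟩
  · ext (i | i)
    exacts [rfl, hx i]
  · rintro ⟨c, rfl⟩ i
    rfl

lemma sumElim_self_injective : Function.Injective fun c : ι → α => Sum.elim c c :=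
  fun _ _ h => funext fun i => congrFun h (Sum.inl i)

lemma ncard_range_sumElim_self [Fintype ι] [DecidableEq ι] [Fintype α] :
    (Set.range fun c : ι → α => Sum.elim c c).ncard = Fintype.card α ^ Fintype.card ι := by
  rw [Set.ncard_range_of_injective sumElim_self_injective, Nat.card_eq_fintype_card,
    Fintype.card_fun]

lemma noiseOp_indicator_range_sumElim_self [Fintype ι] [DecidableEq ι] (ε r : ℝ)
    (x : ι ⊕ ι → ZMod 2) :
    noiseOp ε ((Set.range fun c => Sum.elim c c).indicator fun _ => r) x
      = r * ∏ i, noiseKernel (2 * ε * (1 - ε)) (x (Sum.inl i)) (x (Sum.inr i)) := by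
  rw [noiseOp_eq_sum_prod_noiseKernel, sum_mul_indicator_range sumElim_self_injective]
  simp only [Fintype.prod_sum_type, Sum.elim_inl, Sum.elim_inr, ← prod_mul_distrib]
  rw [← sum_mul, ← Fintype.prod_sum (fun i u => noiseKernel ε u (x (Sum.inl i)) *
    noiseKernel ε u (x (Sum.inr i))), mul_comm]
  simp only [sum_noiseKernel_mul_noiseKernel]

end Diagonal

theorem stmt13_general (m : ℕ) (ε : ℝ)
    (C : Set ((Fin m ⊕ Fin m) → ZMod 2))
    (hC : C = {x | ∀ i, x (Sum.inl i) = x (Sum.inr i)})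
    (f : ((Fin m ⊕ Fin m) → ZMod 2) → ℝ)
    (hf : f = Set.indicator C (fun _ => (Set.ncard C : ℝ))) :
    (1 / 2 ^ (2 * m)) * ∑ x : (Fin m ⊕ Fin m) → ZMod 2, (noiseOp ε f x) ^ 2
      = (1 + (1 - 2 * ε) ^ 4) ^ m := by
  rw [setOf_forall_inl_eq_inr] at hC
  subst hC hf
  simp only [noiseOp_indicator_range_sumElim_self, ncard_range_sumElim_self, mul_pow,
    ← prod_pow, ← mul_sum, sum_prod_sumElim fun _ a b => noiseKernel (2 * ε * (1 - ε)) a b ^ 2,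
    sum_sum_noiseKernel_sq, prod_const, card_univ, Fintype.card_fin, ZMod.card]
  have hδ : (1 - 2 * (2 * ε * (1 - ε))) ^ 2 = (1 - 2 * ε) ^ 4 := by ring
  rw [hδ, Nat.cast_pow, Nat.cast_ofNat, ← pow_mul, mul_comm m 2]
  field_simp

theorem stmt13 (m : ℕ) (ε : ℝ) (hε0 : 0 ≤ ε) (hε : ε ≤ 1 / 2)
    (C : Set ((Fin m ⊕ Fin m) → ZMod 2))
    (hC : C = {x | ∀ i, x (Sum.inl i) = x (Sum.inr i)})
    (f : ((Fin m ⊕ Fin m) → ZMod 2) → ℝ)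
    (hf : f = Set.indicator C (fun _ => (Set.ncard C : ℝ))) :
    (1 / 2 ^ (2 * m)) * ∑ x : (Fin m ⊕ Fin m) → ZMod 2, (noiseOp ε f x) ^ 2
      = (1 + (1 - 2 * ε) ^ 4) ^ m :=
  stmt13_general m ε C hC f hf
end

section
/- For fixed real p ≥ 2, the function a(ε) = (1/2 − ε)·((1−ε)^{p−1} − ε^{p−1}) / ((1−ε)^p + ε^p) is strictly decreasing on [0, 1/2], with a(0) = 1/2 and a(1/2) = 0. -/
-- strictly decreasing in t on [0,1]
lemma key16 (p : ℝ) (hp : 2 ≤ p) {t1 t2 : ℝ} (h1 : 0 ≤ t1) (h12 : t1 < t2) (h2 : t2 ≤ 1) :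
    (1 - t2) * (1 - t2 ^ (p - 1)) / (1 + t2 ^ p) <
      (1 - t1) * (1 - t1 ^ (p - 1)) / (1 + t1 ^ p) := by
  have hp1 : 0 < p - 1 := by linarith
  have h2' : 0 ≤ t2 := le_trans h1 h12.le
  have ht11 : t1 < 1 := lt_of_lt_of_le h12 h2
  have hb : t1 ^ (p - 1) < 1 := by
    rcases eq_or_lt_of_le h1 with h | h
    · rw [← h, Real.zero_rpow hp1.ne']; norm_num
    · exact Real.rpow_lt_one h1 ht11 hp1
  have hd : t2 ^ (p - 1) ≤ 1 := Real.rpow_le_one h2' h2 hp1.le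
  have hbd : t1 ^ (p - 1) ≤ t2 ^ (p - 1) := Real.rpow_le_rpow h1 h12.le hp1.le
  have hu : t1 ^ p ≤ t2 ^ p := Real.rpow_le_rpow h1 h12.le (by linarith)
  have hu1 : 0 ≤ t1 ^ p := Real.rpow_nonneg h1 p
  have hden1 : (0:ℝ) < 1 + t1 ^ p := by linarith
  have hden2 : (0:ℝ) < 1 + t2 ^ p := by linarith
  have hnum : (1 - t2) * (1 - t2 ^ (p - 1)) < (1 - t1) * (1 - t1 ^ (p - 1)) := by
    nlinarith
  have hnum2 : 0 ≤ (1 - t2) * (1 - t2 ^ (p - 1)) :=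
    mul_nonneg (by linarith) (by linarith)
  rw [div_lt_div_iff₀ hden2 hden1]
  nlinarith

lemma ident16 (p : ℝ) (hp : 2 ≤ p) {ε : ℝ} (h0 : 0 ≤ ε) (h1 : ε < 1) :
    (1 / 2 - ε) * ((1 - ε) ^ (p - 1) - ε ^ (p - 1)) / ((1 - ε) ^ p + ε ^ p) =
      (1 - ε / (1 - ε)) * (1 - (ε / (1 - ε)) ^ (p - 1)) / (1 + (ε / (1 - ε)) ^ p) / 2 := by
  set t := ε / (1 - ε) with htdef
  have hε1 : (0:ℝ) < 1 - ε := by linarith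
  have ht0 : 0 ≤ t := div_nonneg h0 hε1.le
  have htε : t * (1 - ε) = ε := div_mul_cancel₀ ε hε1.ne'
  have hA : 0 < (1 - ε) ^ (p - 1) := Real.rpow_pos_of_pos hε1 _
  have h1εp : (1 - ε) ^ p = (1 - ε) ^ (p - 1) * (1 - ε) := by
    rw [show p = p - 1 + 1 by ring, Real.rpow_add hε1, Real.rpow_one]
    ring_nf
  have hεp1 : ε ^ (p - 1) = t ^ (p - 1) * (1 - ε) ^ (p - 1) := by
    conv_lhs => rw [← htε]
    rw [Real.mul_rpow ht0 hε1.le]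
  have hεp : ε ^ p = t ^ p * ((1 - ε) ^ (p - 1) * (1 - ε)) := by
    conv_lhs => rw [← htε]
    rw [Real.mul_rpow ht0 hε1.le, h1εp]
  have hup : 0 ≤ t ^ p := Real.rpow_nonneg ht0 p
  rw [hεp1, hεp, h1εp]
  have hden : (0:ℝ) < 1 + t ^ p := by linarith
  rw [htdef]
  field_simp
  ring

theorem stmt16 (p : ℝ) (hp : 2 ≤ p) (a : ℝ → ℝ)
    (ha : a = fun ε => (1 / 2 - ε) * ((1 - ε) ^ (p - 1) - ε ^ (p - 1)) / ((1 - ε) ^ p + ε ^ p)) :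
    StrictAntiOn a (Set.Icc (0 : ℝ) (1 / 2)) ∧ a 0 = 1 / 2 ∧ a (1 / 2) = 0 := by
  subst ha
  refine ⟨?_, ?_, ?_⟩
  · intro x hx y hy hxy
    simp only [Set.mem_Icc] at hx hy
    have hx1 : x < 1 := by linarith [hx.2]
    have hy1 : y < 1 := by linarith [hy.2]
    simp only
    rw [ident16 p hp hx.1 hx1, ident16 p hp hy.1 hy1]
    have ht : x / (1 - x) < y / (1 - y) := by
      rw [div_lt_div_iff₀ (by linarith) (by linarith)]
      nlinarith
    have ht0 : 0 ≤ x / (1 - x) := div_nonneg hx.1 (by linarith)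
    have ht1 : y / (1 - y) ≤ 1 := by
      rw [div_le_one (by linarith)]
      linarith [hy.2]
    have := key16 p hp ht0 ht ht1
    linarith
  · norm_num [Real.zero_rpow (show p - 1 ≠ 0 by linarith),
      Real.zero_rpow (show p ≠ 0 by linarith), Real.one_rpow]
  · norm_num
end

section
/- Let 0 < R < 1, 0 < γ < 1/2, y₁ = √(8 + 8^(1−R)) − 3, and y₀ = (6γ − 3 + √((3−6γ)² + 4γ(1−γ)))/(2(1−γ)). Then y₁ ≤ y₀ if and only if γ ≥ 8^R + 1 − 3√(8^(2R−1) + 8^(R−1)). -/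
theorem stmt17 (R γ : ℝ) (hR0 : 0 < R) (hR1 : R < 1) (hγ0 : 0 < γ) (hγ1 : γ < 1 / 2)
    (y₁ y₀ : ℝ)
    (hy1 : y₁ = Real.sqrt (8 + (8 : ℝ) ^ (1 - R)) - 3)
    (hy0 : y₀ = (6 * γ - 3 + Real.sqrt ((3 - 6 * γ) ^ 2 + 4 * γ * (1 - γ))) / (2 * (1 - γ))) :
    y₁ ≤ y₀ ↔ γ ≥ (8 : ℝ) ^ R + 1 - 3 * Real.sqrt ((8 : ℝ) ^ (2 * R - 1) + (8 : ℝ) ^ (R - 1)) := by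
  have h8 : (0:ℝ) < 8 := by norm_num
  set a := (8:ℝ) ^ (1 - R) with ha
  have ha1 : 1 < a := by
    rw [ha]
    exact (Real.one_lt_rpow_iff_of_pos h8).mpr (Or.inl ⟨by norm_num, by linarith⟩)
  have ha0 : 0 < a := by linarith
  set s := Real.sqrt (8 + a) with hs
  have hsnn : 0 ≤ s := Real.sqrt_nonneg _
  have hs2 : s ^ 2 = 8 + a := Real.sq_sqrt (by linarith)
  have hs3 : 3 < s := by nlinarith
  -- facts about a and the sqrt in the RHS
  have e1 : a * (8:ℝ) ^ (R - 1) = 1 := by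
    rw [ha, ← Real.rpow_add h8]
    norm_num
  have e2 : a * (8:ℝ) ^ (2 * R - 1) = (8:ℝ) ^ R := by
    rw [ha, ← Real.rpow_add h8]
    congr 1
    ring
  have h1 : a * (8:ℝ) ^ R = 8 := by
    rw [ha, ← Real.rpow_add h8]
    norm_num
  have h2 : a * Real.sqrt ((8:ℝ) ^ (2 * R - 1) + (8:ℝ) ^ (R - 1)) = s := by
    have hsum : 8 + a = a ^ 2 * ((8:ℝ) ^ (2 * R - 1) + (8:ℝ) ^ (R - 1)) := by
      nlinarith [e1, e2, h1]
    rw [hs, hsum, Real.sqrt_mul (sq_nonneg a), Real.sqrt_sq ha0.le]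
  set r := (8:ℝ) ^ R + 1 - 3 * Real.sqrt ((8:ℝ) ^ (2 * R - 1) + (8:ℝ) ^ (R - 1)) with hr
  have hkey : a * r = s ^ 2 - 3 * s := by
    rw [hr]
    linear_combination h1 - 3 * h2 - hs2
  -- facts about y₀
  set t := Real.sqrt ((3 - 6 * γ) ^ 2 + 4 * γ * (1 - γ)) with htdef
  have htnn : 0 ≤ t := Real.sqrt_nonneg _
  have ht2 : t ^ 2 = (3 - 6 * γ) ^ 2 + 4 * γ * (1 - γ) := by
    rw [htdef]
    exact Real.sq_sqrt (by nlinarith)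
  have hc : (0:ℝ) < 1 - γ := by linarith
  have htb : 3 - 6 * γ < t := by nlinarith [mul_pos hγ0 hc]
  have hE : 2 * (1 - γ) * y₀ = 6 * γ - 3 + t := by
    rw [hy0]
    field_simp
  have hy0nn : 0 ≤ y₀ := by nlinarith [hE, htb, hc]
  have hq0 : (1 - γ) * y₀ ^ 2 + (3 - 6 * γ) * y₀ - γ = 0 := by
    have h5 : 4 * (1 - γ) * ((1 - γ) * y₀ ^ 2 + (3 - 6 * γ) * y₀ - γ) = 0 := by
      linear_combination (2 * (1 - γ) * y₀ + t + 3 - 6 * γ) * hE + ht2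
    have h4c : (4 : ℝ) * (1 - γ) ≠ 0 := by positivity
    exact (mul_eq_zero.mp h5).resolve_left h4c
  -- q(y₁)
  have hy1nn : 0 ≤ y₁ := by rw [hy1]; linarith
  have hq1 : (1 - γ) * y₁ ^ 2 + (3 - 6 * γ) * y₁ - γ = s ^ 2 - 3 * s - γ * a := by
    rw [hy1]
    linear_combination (-γ) * hs2
  have hF : 0 < (1 - γ) * (y₁ + y₀) + (3 - 6 * γ) := by
    have := mul_nonneg hc.le (add_nonneg hy1nn hy0nn)
    linarith
  constructor
  · intro h
    have hprod : 0 ≤ (y₀ - y₁) * ((1 - γ) * (y₁ + y₀) + (3 - 6 * γ)) :=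
      mul_nonneg (sub_nonneg.2 h) hF.le
    have hle : s ^ 2 - 3 * s - γ * a ≤ 0 := by linarith only [hprod, hq0, hq1]
    have h6 : a * r ≤ a * γ := by linarith only [hkey, hle]
    exact le_of_mul_le_mul_left h6 ha0
  · intro h
    have h7 : a * r ≤ a * γ := mul_le_mul_of_nonneg_left h ha0.le
    have hle : s ^ 2 - 3 * s - γ * a ≤ 0 := by linarith only [hkey, h7]
    by_contra hcon
    push_neg at hcon
    have hprod : 0 < (y₁ - y₀) * ((1 - γ) * (y₁ + y₀) + (3 - 6 * γ)) :=
      mul_pos (sub_pos.2 hcon) hF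
    linarith only [hprod, hq0, hq1, hle]
end
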